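/- arXiv:2102.08600 — 2 statements merged into one kernel-verified Lean document; each statement's English description precedes it below -/
import Mathlib

section
/- Under the stated assumptions, λ_max( (I − S M̃_s^{-1} S^T A)(I − Π_A) ) = 1 − σ_TL, where σ_TL = λ_min^+( S M̃_s^{-1} S^T A (I − Π_A) ). -/
open Matrix

/-- Smallest eigenvalue (real spectrum). -/
noncomputable def lamMin {n : ℕ} (M : Matrix (Fin n) (Fin n) ℝ) : ℝ :=
  sInf (spectrum ℝ M)

/-- Largest eigenvalue (real spectrum). -/
noncomputable def lamMax {n : ℕ} (M : Matrix (Fin n) (Fin n) ℝ) : ℝ :=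
  sSup (spectrum ℝ M)

/-- Smallest positive eigenvalue (real spectrum). -/
noncomputable def lamMinPos {n : ℕ} (M : Matrix (Fin n) (Fin n) ℝ) : ℝ :=
  sInf {t : ℝ | t ∈ spectrum ℝ M ∧ 0 < t}

/-- Energy norm of a vector induced by an SPD matrix `A`. -/
noncomputable def eNorm {n : ℕ} (A : Matrix (Fin n) (Fin n) ℝ) (v : Fin n → ℝ) : ℝ :=
  Real.sqrt (v ⬝ᵥ A.mulVec v)

/-- `A`-norm of a matrix `B`: `‖B‖_A = sup_{v ≠ 0} ‖Bv‖_A / ‖v‖_A`. -/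
noncomputable def aNorm {n : ℕ} (A B : Matrix (Fin n) (Fin n) ℝ) : ℝ :=
  sSup {r : ℝ | ∃ v : Fin n → ℝ, v ≠ 0 ∧ r = eNorm A (B.mulVec v) / eNorm A v}

/-- The `A`-orthogonal projection `Π_A = P (Pᵀ A P)⁻¹ Pᵀ A`. -/
noncomputable def proj {n nc : ℕ} (A : Matrix (Fin n) (Fin n) ℝ)
    (P : Matrix (Fin n) (Fin nc) ℝ) : Matrix (Fin n) (Fin n) ℝ :=
  P * (Pᵀ * A * P)⁻¹ * Pᵀ * A

/-- `M̃_s = Msᵀ (Ms + Msᵀ - As)⁻¹ Ms`. -/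
noncomputable def tMs {ns : ℕ} (Ms As : Matrix (Fin ns) (Fin ns) ℝ) :
    Matrix (Fin ns) (Fin ns) ℝ :=
  Msᵀ * (Ms + Msᵀ - As)⁻¹ * Ms

/-- `S M̃_s⁻¹ Sᵀ A`. -/
noncomputable def smoothX {n ns : ℕ} (A : Matrix (Fin n) (Fin n) ℝ)
    (S : Matrix (Fin n) (Fin ns) ℝ) (Ms : Matrix (Fin ns) (Fin ns) ℝ) :
    Matrix (Fin n) (Fin n) ℝ :=
  S * (tMs Ms (Sᵀ * A * S))⁻¹ * Sᵀ * A

/-- `σ_TL = λ_min⁺( S M̃_s⁻¹ Sᵀ A (I - Π_A) )`. -/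
noncomputable def sigmaTL {n ns nc : ℕ} (A : Matrix (Fin n) (Fin n) ℝ)
    (S : Matrix (Fin n) (Fin ns) ℝ) (P : Matrix (Fin n) (Fin nc) ℝ)
    (Ms : Matrix (Fin ns) (Fin ns) ℝ) : ℝ :=
  lamMinPos (smoothX A S Ms * (1 - proj A P))

/-- Exact TLHB iteration matrix. -/
noncomputable def Etl {n ns nc : ℕ} (A : Matrix (Fin n) (Fin n) ℝ)
    (S : Matrix (Fin n) (Fin ns) ℝ) (P : Matrix (Fin n) (Fin nc) ℝ)
    (Ms : Matrix (Fin ns) (Fin ns) ℝ) : Matrix (Fin n) (Fin n) ℝ :=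
  (1 - S * (Msᵀ)⁻¹ * Sᵀ * A) * (1 - proj A P) * (1 - S * Ms⁻¹ * Sᵀ * A)

/-- Inexact TLHB iteration matrix with coarse solver `Bc`. -/
noncomputable def EtlIn {n ns nc : ℕ} (A : Matrix (Fin n) (Fin n) ℝ)
    (S : Matrix (Fin n) (Fin ns) ℝ) (P : Matrix (Fin n) (Fin nc) ℝ)
    (Ms : Matrix (Fin ns) (Fin ns) ℝ) (Bc : Matrix (Fin nc) (Fin nc) ℝ) :
    Matrix (Fin n) (Fin n) ℝ :=
  (1 - S * (Msᵀ)⁻¹ * Sᵀ * A) * (1 - P * Bc⁻¹ * Pᵀ * A) * (1 - S * Ms⁻¹ * Sᵀ * A)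

/-!
Write `X = S M̃_s⁻¹ Sᵀ A`, `Q = I - Π_A` and `⟨u, v⟩_A = uᵀ A v`. Then `Q` is an `A`-orthogonal
projection and `0 ≤ ⟨X v, v⟩_A ≤ ⟨v, v⟩_A`, the upper bound because
`M̃_s - A_s = (A_s - M_s) (M_s + M_sᵀ - A_s)⁻¹ (A_s - M_s)ᵀ` is positive semidefinite. On the
range of `Q` the form `⟨X v, v⟩_A` is even positive: `Π_A v = 0` gives `Pᵀ A v = 0`, and
`Sᵀ A v = 0` as well would force `v = 0` because `(S P)` has full row rank.

Since `ab` and `ba` have the same nonzero eigenvalues, the nonzero spectra of `(I - X) Q` and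
`X Q` are those of `Q - Q X` and `Q X`. Their eigenvectors for nonzero eigenvalues lie in the
range of `Q`, where `Q - Q X` acts as `I - Q X`. Hence the spectrum of `(I - X) Q` is
`{0} ∪ {1 - s}`, with `s` running over the positive eigenvalues of `X Q`, which lie in `(0, 1]`.
-/

theorem spectrum.mem_mul_comm_of_ne_zero {R A : Type*} [Field R] [Ring A] [Algebra R A]
    {a b : A} {t : R} (ht : t ≠ 0) : t ∈ spectrum R (a * b) ↔ t ∈ spectrum R (b * a) := by
  have := congrArg (t ∈ ·) (spectrum.nonzero_mul_comm a b)
  simpa [ht] using this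

theorem sSup_insert_zero_image_one_sub {S : Set ℝ} (hne : S.Nonempty) (hbdd : BddBelow S)
    (hle : ∀ s ∈ S, s ≤ 1) : sSup (insert 0 ((1 - ·) '' S)) = 1 - sInf S := by
  have himage : sSup ((1 - ·) '' S) = 1 - sInf S :=
    (Antitone.map_csInf_of_continuousAt (by fun_prop) (fun _ _ h => sub_le_sub_left h 1)
      hne hbdd).symm
  have hbdd' : BddAbove ((1 - ·) '' S) := by
    refine ⟨1 - sInf S, ?_⟩
    rintro _ ⟨s, hs, rfl⟩
    exact sub_le_sub_left (csInf_le hbdd hs) 1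
  obtain ⟨s, hs⟩ := hne
  rw [csSup_insert hbdd' ⟨_, s, hs, rfl⟩, himage, sup_eq_right]
  linarith [csInf_le hbdd hs, hle s hs]

namespace Matrix

theorem mem_spectrum_iff_exists_mulVec_eq_smul {K ι : Type*} [Field K] [Fintype ι] [DecidableEq ι]
    {M : Matrix ι ι K} {t : K} :
    t ∈ spectrum K M ↔ ∃ v ≠ 0, M *ᵥ v = t • v := by
  simp only [← spectrum_toLin', ← Module.End.hasEigenvalue_iff_mem_spectrum,
    Module.End.hasEigenvalue_iff, Module.End.mem_eigenspace_iff, toLin'_apply,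
    Submodule.ne_bot_iff, and_comm]

theorem mulVec_eq_self_of_mul_eq {K ι : Type*} [Field K] [Fintype ι] {Q T : Matrix ι ι K}
    (hQT : Q * T = T) {v : ι → K} {t : K} (hv : T *ᵥ v = t • v) (ht : t ≠ 0) : Q *ᵥ v = v := by
  have : t • Q *ᵥ v = t • v := by rw [← mulVec_smul, ← hv, mulVec_mulVec, hQT]
  exact smul_right_injective _ ht this

theorem mulVec_injective_of_rank_eq {K m n : Type*} [Field K] [Fintype n] {M : Matrix m n K}
    (h : M.rank = Fintype.card n) : Function.Injective M.mulVec :=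
  mulVec_injective_iff.mpr <| linearIndependent_iff_card_eq_finrank_span.mpr <| by
    rw [Set.finrank, ← rank_eq_finrank_span_cols, h]

theorem eq_zero_of_transpose_mulVec_eq_zero_of_rank_fromCols {K m n₁ n₂ : Type*} [Field K]
    [Fintype m] [Fintype n₁] [Fintype n₂] {S : Matrix m n₁ K} {P : Matrix m n₂ K}
    (h : (fromCols S P).rank = Fintype.card m) {w : m → K} (hS : Sᵀ *ᵥ w = 0)
    (hP : Pᵀ *ᵥ w = 0) : w = 0 := by
  rw [← rank_transpose, transpose_fromCols] at h
  refine mulVec_injective_of_rank_eq h ?_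
  rw [fromRows_mulVec, hS, hP, mulVec_zero]
  ext (i | i) <;> rfl

theorem PosSemidef.isSymm {m : Type*} [Fintype m] {A : Matrix m m ℝ} (hA : A.PosSemidef) :
    A.IsSymm :=
  isHermitian_iff_isSymm.mp hA.isHermitian

theorem PosSemidef.transpose_mul_mul_same {m n : Type*} [Fintype m] [Fintype n] {A : Matrix m m ℝ}
    (hA : A.PosSemidef) (S : Matrix m n ℝ) : (Sᵀ * A * S).PosSemidef := by
  simpa using hA.conjTranspose_mul_mul_same S

theorem mulVec_injective_of_posDef_add_transpose_sub {m : Type*} [Fintype m]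
    {M As : Matrix m m ℝ} (hAs : As.PosSemidef) (hW : (M + Mᵀ - As).PosDef) :
    Function.Injective M.mulVec := by
  have hker : ∀ v, M *ᵥ v = 0 → v = 0 := by
    intro v hv
    by_contra hv0
    have hWv := hW.dotProduct_mulVec_pos hv0
    rw [star_trivial, sub_mulVec, add_mulVec, dotProduct_sub, dotProduct_add, hv,
      dotProduct_mulVec v Mᵀ, vecMul_transpose, hv, dotProduct_zero, zero_dotProduct,
      zero_add] at hWv
    have hAsv := hAs.dotProduct_mulVec_nonneg v
    rw [star_trivial] at hAsv
    linarith
  exact LinearMap.ker_eq_bot.mp (ker_mulVecLin_eq_bot_iff.mpr hker)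

theorem dotProduct_inv_mulVec_le {m n : Type*} [Fintype m] [Fintype n] [DecidableEq n]
    {A : Matrix m m ℝ} {S : Matrix m n ℝ} {M : Matrix n n ℝ} (hA : A.PosSemidef)
    (hM : IsUnit M.det) (hMA : (M - Sᵀ * A * S).PosSemidef) (v : m → ℝ) :
    Sᵀ *ᵥ A *ᵥ v ⬝ᵥ M⁻¹ *ᵥ Sᵀ *ᵥ A *ᵥ v ≤ v ⬝ᵥ A *ᵥ v := by
  set u := Sᵀ *ᵥ A *ᵥ v
  set y := M⁻¹ *ᵥ u
  have hAsymm : ∀ x z, x ⬝ᵥ A *ᵥ z = z ⬝ᵥ A *ᵥ x := fun x z => by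
    rw [dotProduct_mulVec, ← mulVec_transpose, hA.isSymm.eq, dotProduct_comm]
  have hSt : ∀ x z, x ⬝ᵥ Sᵀ *ᵥ z = S *ᵥ x ⬝ᵥ z := fun x z => by
    rw [dotProduct_mulVec, vecMul_transpose]
  have hyMy : y ⬝ᵥ M *ᵥ y = u ⬝ᵥ y := by
    rw [mulVec_mulVec, mul_nonsing_inv _ hM, one_mulVec, dotProduct_comm]
  have hcross : v ⬝ᵥ A *ᵥ S *ᵥ y = u ⬝ᵥ y := by
    rw [hAsymm, ← hSt, dotProduct_comm]
  have hSy : S *ᵥ y ⬝ᵥ A *ᵥ S *ᵥ y ≤ y ⬝ᵥ M *ᵥ y := by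
    have := hMA.dotProduct_mulVec_nonneg y
    rwa [star_trivial, sub_mulVec, dotProduct_sub, ← mulVec_mulVec, ← mulVec_mulVec, hSt,
      sub_nonneg] at this
  have hsq := hA.dotProduct_mulVec_nonneg (v - S *ᵥ y)
  rw [star_trivial, mulVec_sub, dotProduct_sub, sub_dotProduct, sub_dotProduct,
    hAsymm (S *ᵥ y) v, hcross] at hsq
  linarith

open scoped MatrixOrder in
theorem PosDef.exists_pos_mem_spectrum_inv_mul {ι : Type*} [Fintype ι] [DecidableEq ι]
    {A K : Matrix ι ι ℝ} (hA : A.PosDef) (hK : K.PosSemidef) (hK0 : K ≠ 0) :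
    ∃ s ∈ spectrum ℝ (A⁻¹ * K), 0 < s := by
  obtain ⟨B, hB⟩ := CStarAlgebra.nonneg_iff_eq_star_mul_self.mp hA.inv.posSemidef.nonneg
  have hH : (B * K * Bᴴ).PosSemidef := hK.mul_mul_conjTranspose_same B
  have hH0 : B * K * Bᴴ ≠ 0 := by
    intro h
    have hAKA : A⁻¹ * K * A⁻¹ = 0 := by
      rw [hB, star_eq_conjTranspose]
      calc Bᴴ * B * K * (Bᴴ * B) = Bᴴ * (B * K * Bᴴ) * B := by noncomm_ring
        _ = 0 := by rw [h, mul_zero, zero_mul]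
    have hAdet : IsUnit A.det := hA.det_pos.ne'.isUnit
    apply hK0
    calc K = A * (A⁻¹ * K * A⁻¹) * A := by
          rw [mul_assoc A⁻¹, mul_nonsing_inv_cancel_left _ _ hAdet,
            nonsing_inv_mul_cancel_right _ _ hAdet]
      _ = 0 := by rw [hAKA, mul_zero, zero_mul]
  obtain ⟨i, hi⟩ : ∃ i, hH.isHermitian.eigenvalues i ≠ 0 := by
    by_contra! h
    exact hH0 (hH.isHermitian.eigenvalues_eq_zero_iff.mp (funext h))
  refine ⟨_, ?_, (hH.eigenvalues_nonneg i).lt_of_ne' hi⟩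
  rw [hB, star_eq_conjTranspose, mul_assoc, spectrum.mem_mul_comm_of_ne_zero hi]
  exact hH.isHermitian.eigenvalues_mem_spectrum_real i

section TwoGrid

variable {ι : Type*} [Fintype ι] {A Y Q : Matrix ι ι ℝ}

theorem dotProduct_mulVec_mulVec_eq_of_mulVec_eq_self (hAQ : Qᵀ * A = A * Q) {v : ι → ℝ}
    (hv : Q *ᵥ v = v) (w : ι → ℝ) : v ⬝ᵥ A *ᵥ Q *ᵥ w = v ⬝ᵥ A *ᵥ w := by
  rw [mulVec_mulVec, ← hAQ, ← mulVec_mulVec, dotProduct_mulVec, vecMul_transpose, hv]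

theorem pos_and_le_one_of_mulVec_eq_smul (hAQ : Qᵀ * A = A * Q)
    (hpos : ∀ v ≠ 0, Q *ᵥ v = v → 0 < v ⬝ᵥ (A * Y) *ᵥ v)
    (hle : ∀ v, v ⬝ᵥ (A * Y) *ᵥ v ≤ v ⬝ᵥ A *ᵥ v) {v : ι → ℝ} {s : ℝ} (hv0 : v ≠ 0)
    (hQv : Q *ᵥ v = v) (hv : (Q * Y) *ᵥ v = s • v) : 0 < s ∧ s ≤ 1 := by
  have hrayleigh : s * (v ⬝ᵥ A *ᵥ v) = v ⬝ᵥ (A * Y) *ᵥ v := by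
    rw [← smul_eq_mul, ← dotProduct_smul, ← mulVec_smul, ← hv, ← mulVec_mulVec,
      dotProduct_mulVec_mulVec_eq_of_mulVec_eq_self hAQ hQv, mulVec_mulVec]
  have hYpos := hpos v hv0 hQv
  have hApos : 0 < v ⬝ᵥ A *ᵥ v := hYpos.trans_le (hle v)
  constructor
  · exact pos_of_mul_pos_left (hrayleigh ▸ hYpos) hApos.le
  · exact (mul_le_iff_le_one_left hApos).mp (hrayleigh ▸ hle v)

variable [DecidableEq ι] (hQ : IsIdempotentElem Q) (hAQ : Qᵀ * A = A * Q)
  (hpos : ∀ v ≠ 0, Q *ᵥ v = v → 0 < v ⬝ᵥ (A * Y) *ᵥ v)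
include hQ hAQ hpos

theorem le_one_of_mem_spectrum_mul (hle : ∀ v, v ⬝ᵥ (A * Y) *ᵥ v ≤ v ⬝ᵥ A *ᵥ v) {s : ℝ}
    (hs : s ∈ spectrum ℝ (Y * Q)) (hs0 : 0 < s) : s ≤ 1 := by
  rw [spectrum.mem_mul_comm_of_ne_zero hs0.ne', mem_spectrum_iff_exists_mulVec_eq_smul] at hs
  obtain ⟨v, hv0, hv⟩ := hs
  have hQv := mulVec_eq_self_of_mul_eq (by rw [← mul_assoc, hQ.eq]) hv hs0.ne'
  exact (pos_and_le_one_of_mulVec_eq_smul hAQ hpos hle hv0 hQv hv).2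

theorem spectrum_one_sub_mul_eq (hQ1 : Q ≠ 1) (hle : ∀ v, v ⬝ᵥ (A * Y) *ᵥ v ≤ v ⬝ᵥ A *ᵥ v) :
    spectrum ℝ ((1 - Y) * Q) = insert 0 ((1 - ·) '' {s | s ∈ spectrum ℝ (Y * Q) ∧ 0 < s}) := by
  ext t
  rcases eq_or_ne t 0 with rfl | ht
  · simp only [Set.mem_insert_iff, true_or, iff_true, spectrum.zero_mem_iff,
      isUnit_iff_isUnit_det, det_mul]
    exact fun h => hQ1 ((IsIdempotentElem.iff_eq_one_of_isUnit ((isUnit_iff_isUnit_det Q).mpr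
      (isUnit_of_mul_isUnit_right h))).mp hQ)
  rw [Set.mem_insert_iff, or_iff_right ht, spectrum.mem_mul_comm_of_ne_zero ht, mul_sub, mul_one]
  constructor
  · rw [mem_spectrum_iff_exists_mulVec_eq_smul]
    rintro ⟨v, hv0, hv⟩
    have hQv := mulVec_eq_self_of_mul_eq (by rw [mul_sub, ← mul_assoc, hQ.eq]) hv ht
    have hQYv : (Q * Y) *ᵥ v = (1 - t) • v := by
      rw [sub_mulVec, hQv] at hv
      rw [sub_smul, one_smul, ← hv, sub_sub_cancel]
    have hpos' := (pos_and_le_one_of_mulVec_eq_smul hAQ hpos hle hv0 hQv hQYv).1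
    refine ⟨1 - t, ⟨?_, hpos'⟩, sub_sub_cancel 1 t⟩
    rw [spectrum.mem_mul_comm_of_ne_zero hpos'.ne', mem_spectrum_iff_exists_mulVec_eq_smul]
    exact ⟨v, hv0, hQYv⟩
  · rintro ⟨s, ⟨hs, hs0⟩, rfl⟩
    rw [spectrum.mem_mul_comm_of_ne_zero hs0.ne', mem_spectrum_iff_exists_mulVec_eq_smul] at hs
    obtain ⟨v, hv0, hv⟩ := hs
    have hQv := mulVec_eq_self_of_mul_eq (by rw [← mul_assoc, hQ.eq]) hv hs0.ne'
    rw [mem_spectrum_iff_exists_mulVec_eq_smul]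
    exact ⟨v, hv0, by rw [sub_mulVec, hQv, hv, sub_smul, one_smul]⟩

theorem exists_pos_mem_spectrum_mul (hA : A.PosDef) (hAY : (A * Y).PosSemidef) (hQ0 : Q ≠ 0) :
    ∃ s ∈ spectrum ℝ (Y * Q), 0 < s := by
  obtain ⟨w, hw⟩ : ∃ w, Q *ᵥ w ≠ 0 := by
    by_contra! h
    exact hQ0 (ext_iff_mulVec.mpr fun w => by rw [h, zero_mulVec])
  have hQw : Q *ᵥ Q *ᵥ w = Q *ᵥ w := by rw [mulVec_mulVec, hQ.eq]
  have hK : (Qᵀ * (A * Y) * Q).PosSemidef := by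
    simpa using hAY.conjTranspose_mul_mul_same Q
  have hK0 : Qᵀ * (A * Y) * Q ≠ 0 := by
    intro h
    have hKw : Q *ᵥ w ⬝ᵥ (Qᵀ * (A * Y) * Q) *ᵥ Q *ᵥ w = Q *ᵥ w ⬝ᵥ (A * Y) *ᵥ Q *ᵥ w := by
      rw [mul_assoc, ← mulVec_mulVec, dotProduct_mulVec, vecMul_transpose, ← mulVec_mulVec, hQw]
    have := hpos _ hw hQw
    rw [← hKw, h, zero_mulVec, dotProduct_zero] at this
    exact this.false
  obtain ⟨s, hs, hs0⟩ := hA.exists_pos_mem_spectrum_inv_mul hK hK0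
  have hAK : A⁻¹ * (Qᵀ * (A * Y) * Q) = Q * (Y * Q) := by
    rw [← mul_assoc Qᵀ, hAQ, ← mul_assoc, ← mul_assoc,
      nonsing_inv_mul_cancel_left _ _ hA.det_pos.ne'.isUnit]
    simp only [mul_assoc]
  rw [hAK, ← spectrum.mem_mul_comm_of_ne_zero hs0.ne', mul_assoc, hQ.eq] at hs
  exact ⟨s, hs, hs0⟩

theorem sSup_spectrum_one_sub_mul (hA : A.PosDef) (hAY : (A * Y).PosSemidef)
    (hle : ∀ v, v ⬝ᵥ (A * Y) *ᵥ v ≤ v ⬝ᵥ A *ᵥ v) (hQ0 : Q ≠ 0) (hQ1 : Q ≠ 1) :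
    sSup (spectrum ℝ ((1 - Y) * Q)) = 1 - sInf {s | s ∈ spectrum ℝ (Y * Q) ∧ 0 < s} := by
  rw [spectrum_one_sub_mul_eq hQ hAQ hpos hQ1 hle]
  exact sSup_insert_zero_image_one_sub (exists_pos_mem_spectrum_mul hQ hAQ hpos hA hAY hQ0)
    ⟨0, fun s hs => hs.2.le⟩ fun s hs => le_one_of_mem_spectrum_mul hQ hAQ hpos hle hs.1 hs.2

end TwoGrid

end Matrix

section Projection

variable {n nc : ℕ} {A : Matrix (Fin n) (Fin n) ℝ} {P : Matrix (Fin n) (Fin nc) ℝ}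

theorem transpose_mul_mul_proj (hAc : IsUnit (Pᵀ * A * P).det) :
    Pᵀ * A * proj A P = Pᵀ * A :=
  calc Pᵀ * A * proj A P = Pᵀ * A * P * (Pᵀ * A * P)⁻¹ * (Pᵀ * A) := by
        simp only [proj, Matrix.mul_assoc]
    _ = Pᵀ * A := by rw [mul_nonsing_inv _ hAc, Matrix.one_mul]

theorem proj_mul_prolongation (hAc : IsUnit (Pᵀ * A * P).det) : proj A P * P = P :=
  calc proj A P * P = P * ((Pᵀ * A * P)⁻¹ * (Pᵀ * A * P)) := by simp only [proj, Matrix.mul_assoc]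
    _ = P := by rw [nonsing_inv_mul _ hAc, Matrix.mul_one]

theorem isIdempotentElem_proj (hAc : IsUnit (Pᵀ * A * P).det) :
    IsIdempotentElem (proj A P) := by
  have hproj_mul : ∀ X, proj A P * X = P * (Pᵀ * A * P)⁻¹ * (Pᵀ * A * X) := fun X => by
    simp only [proj, Matrix.mul_assoc]
  rw [IsIdempotentElem, hproj_mul, transpose_mul_mul_proj hAc, proj, Matrix.mul_assoc _ Pᵀ]

theorem transpose_proj_mul (hA : Aᵀ = A) : (proj A P)ᵀ * A = A * proj A P := by
  simp only [proj, transpose_mul, transpose_nonsing_inv, transpose_transpose, hA, Matrix.mul_assoc]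

theorem rank_proj_le : (proj A P).rank ≤ nc := by
  rw [proj, Matrix.mul_assoc, Matrix.mul_assoc]
  exact (rank_mul_le_left _ _).trans (rank_le_width _)

theorem proj_ne_one (hnc : nc < n) : proj A P ≠ 1 := fun h => by
  have : (proj A P).rank ≤ nc := rank_proj_le
  rw [h, rank_one, Fintype.card_fin] at this
  omega

theorem proj_ne_zero (hAc : IsUnit (Pᵀ * A * P).det) (hP : P ≠ 0) : proj A P ≠ 0 := fun h =>
  hP (by rw [← proj_mul_prolongation hAc, h, Matrix.zero_mul])

end Projection

section Smoother

variable {ns : ℕ} {Ms As : Matrix (Fin ns) (Fin ns) ℝ}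

theorem tMs_sub_eq (hAs : Asᵀ = As) (hW : IsUnit (Ms + Msᵀ - As).det) :
    tMs Ms As - As = (As - Ms) * (Ms + Msᵀ - As)⁻¹ * (As - Ms)ᵀ := by
  rw [tMs, transpose_sub, hAs]
  generalize hWdef : Ms + Msᵀ - As = W at hW ⊢
  rw [show Msᵀ = W - Ms + As by rw [← hWdef]; abel]
  simp only [Matrix.sub_mul, Matrix.add_mul, Matrix.mul_sub, Matrix.mul_add, Matrix.mul_assoc,
    Matrix.mul_nonsing_inv_cancel_left _ _ hW, Matrix.nonsing_inv_mul _ hW, Matrix.mul_one]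
  abel

variable (hAs : As.PosSemidef) (hW : (Ms + Msᵀ - As).PosDef)
include hAs hW

theorem posSemidef_tMs_sub : (tMs Ms As - As).PosSemidef := by
  rw [tMs_sub_eq hAs.isSymm.eq hW.det_pos.ne'.isUnit]
  simpa using hW.inv.posSemidef.mul_mul_conjTranspose_same (As - Ms)

theorem posDef_tMs : (tMs Ms As).PosDef := by
  simpa [tMs] using hW.inv.conjTranspose_mul_mul_same
    (Matrix.mulVec_injective_of_posDef_add_transpose_sub hAs hW)

end Smoother

section SmoothX

variable {n ns : ℕ} {A : Matrix (Fin n) (Fin n) ℝ} {S : Matrix (Fin n) (Fin ns) ℝ}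
  {Ms : Matrix (Fin ns) (Fin ns) ℝ}

theorem mul_smoothX (hA : Aᵀ = A) :
    A * smoothX A S Ms = (Sᵀ * A)ᵀ * (tMs Ms (Sᵀ * A * S))⁻¹ * (Sᵀ * A) := by
  simp only [smoothX, transpose_mul, transpose_transpose, hA, Matrix.mul_assoc]

theorem dotProduct_mul_smoothX_mulVec (hA : Aᵀ = A) (v : Fin n → ℝ) :
    v ⬝ᵥ (A * smoothX A S Ms) *ᵥ v =
      Sᵀ *ᵥ A *ᵥ v ⬝ᵥ (tMs Ms (Sᵀ * A * S))⁻¹ *ᵥ Sᵀ *ᵥ A *ᵥ v := by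
  rw [mul_smoothX hA, Matrix.mul_assoc, ← mulVec_mulVec, dotProduct_mulVec, vecMul_transpose]
  simp only [← mulVec_mulVec]

variable (hA : A.PosSemidef) (hW : (Ms + Msᵀ - Sᵀ * A * S).PosDef)
include hA hW

theorem posSemidef_mul_smoothX : (A * smoothX A S Ms).PosSemidef := by
  rw [mul_smoothX hA.isSymm.eq]
  simpa using ((posDef_tMs (hA.transpose_mul_mul_same S) hW).inv.posSemidef
    |>.conjTranspose_mul_mul_same (Sᵀ * A))

theorem dotProduct_mul_smoothX_mulVec_le (v : Fin n → ℝ) :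
    v ⬝ᵥ (A * smoothX A S Ms) *ᵥ v ≤ v ⬝ᵥ A *ᵥ v := by
  have hAs := hA.transpose_mul_mul_same S
  rw [dotProduct_mul_smoothX_mulVec hA.isSymm.eq]
  exact dotProduct_inv_mulVec_le hA (posDef_tMs hAs hW).det_pos.ne'.isUnit
    (posSemidef_tMs_sub hAs hW) v

theorem dotProduct_mul_smoothX_mulVec_pos {v : Fin n → ℝ} (hv : Sᵀ *ᵥ A *ᵥ v ≠ 0) :
    0 < v ⬝ᵥ (A * smoothX A S Ms) *ᵥ v := by
  rw [dotProduct_mul_smoothX_mulVec hA.isSymm.eq]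
  simpa using (posDef_tMs (hA.transpose_mul_mul_same S) hW).inv.dotProduct_mulVec_pos hv

end SmoothX

theorem dotProduct_mul_smoothX_mulVec_pos_of_proj_mulVec_eq_zero {n ns nc : ℕ}
    {A : Matrix (Fin n) (Fin n) ℝ} {S : Matrix (Fin n) (Fin ns) ℝ} {P : Matrix (Fin n) (Fin nc) ℝ}
    {Ms : Matrix (Fin ns) (Fin ns) ℝ} (hA : A.PosDef) (hW : (Ms + Msᵀ - Sᵀ * A * S).PosDef)
    (hSP : (fromCols S P).rank = n) (hAc : IsUnit (Pᵀ * A * P).det) {v : Fin n → ℝ}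
    (hv0 : v ≠ 0) (hv : proj A P *ᵥ v = 0) : 0 < v ⬝ᵥ (A * smoothX A S Ms) *ᵥ v := by
  refine dotProduct_mul_smoothX_mulVec_pos hA.posSemidef hW fun hSv => hv0 ?_
  have hPv : Pᵀ *ᵥ A *ᵥ v = 0 := by
    rw [mulVec_mulVec, ← transpose_mul_mul_proj hAc, ← mulVec_mulVec, hv, mulVec_zero]
  have hAv := eq_zero_of_transpose_mulVec_eq_zero_of_rank_fromCols (by simpa using hSP) hSv hPv
  exact (mulVec_injective_iff_isUnit.mpr hA.isUnit).eq_iff' (mulVec_zero A) |>.mp hAv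

theorem lamMax_smoother_complement_proj_general {n ns nc : ℕ}
    (A : Matrix (Fin n) (Fin n) ℝ) (hA : A.PosDef)
    (S : Matrix (Fin n) (Fin ns) ℝ)
    (P : Matrix (Fin n) (Fin nc) ℝ) (hP : P.rank = nc)
    (hns : ns < n) (hnc : nc < n) (hsum : n ≤ ns + nc)
    (hSP : (fromCols S P).rank = n)
    (Ms : Matrix (Fin ns) (Fin ns) ℝ)
    (hMsA : (Ms + Msᵀ - Sᵀ * A * S).PosDef) :
    lamMax ((1 - smoothX A S Ms) * (1 - proj A P)) = 1 - sigmaTL A S P Ms := by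
  have hAc : IsUnit (Pᵀ * A * P).det := by
    have hPinj : Function.Injective P.mulVec := mulVec_injective_of_rank_eq (by simpa using hP)
    simpa using (hA.conjTranspose_mul_mul_same hPinj).det_pos.ne'.isUnit
  have hP0 : P ≠ 0 := by
    rintro rfl
    rw [rank_zero] at hP
    omega
  have hAQ : (1 - proj A P)ᵀ * A = A * (1 - proj A P) := by
    rw [transpose_sub, transpose_one, Matrix.sub_mul, Matrix.mul_sub,
      transpose_proj_mul hA.posSemidef.isSymm.eq, Matrix.one_mul, Matrix.mul_one]
  rw [lamMax, sigmaTL, lamMinPos]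
  refine sSup_spectrum_one_sub_mul (isIdempotentElem_proj hAc).one_sub hAQ (fun v hv0 hv => ?_) hA
    (posSemidef_mul_smoothX hA.posSemidef hMsA)
    (dotProduct_mul_smoothX_mulVec_le hA.posSemidef hMsA) (sub_ne_zero.mpr (proj_ne_one hnc).symm)
    (fun h => proj_ne_zero hAc hP0 (by simpa using h))
  rw [sub_mulVec, one_mulVec, sub_eq_self] at hv
  exact dotProduct_mul_smoothX_mulVec_pos_of_proj_mulVec_eq_zero hA hMsA hSP hAc hv0 hv

/-- `λ_max( (I - S M̃_s⁻¹ Sᵀ A)(I - Π_A) ) = 1 - σ_TL`. -/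
theorem lamMax_smoother_complement_proj {n ns nc : ℕ}
    (A : Matrix (Fin n) (Fin n) ℝ) (hA : A.PosDef)
    (S : Matrix (Fin n) (Fin ns) ℝ) (hS : S.rank = ns)
    (P : Matrix (Fin n) (Fin nc) ℝ) (hP : P.rank = nc)
    (hns : ns < n) (hnc : nc < n) (hsum : n ≤ ns + nc)
    (hSP : (fromCols S P).rank = n)
    (Ms : Matrix (Fin ns) (Fin ns) ℝ) (hMs : IsUnit Ms.det)
    (hMsA : (Ms + Msᵀ - Sᵀ * A * S).PosDef) :
    lamMax ((1 - smoothX A S Ms) * (1 - proj A P)) = 1 - sigmaTL A S P Ms :=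
  lamMax_smoother_complement_proj_general A hA S P hP hns hnc hsum hSP Ms hMsA
end

section
/- Under the stated assumptions, the spectrum of B_TL^{-1} A is contained in the half-open interval (0, 1], where B_TL^{-1} := S M̄_s^{-1} S^T + (I − S M_s^{-T} S^T A) P A_c^{-1} P^T (I − A S M_s^{-1} S^T) with M̄_s := M_s (M_s + M_s^T − A_s)^{-1} M_s^T; equivalently, the exact TLHB preconditioner B_TL is SPD and the iteration matrix E_TL = I − B_TL^{-1} A satisfies ‖E_TL‖_A = λ_max(E_TL) = 1 − λ_min(B_TL^{-1} A) < 1. -/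
/-!
Write `T = S Ms⁻¹ Sᵀ A`, `T' = S Ms⁻ᵀ Sᵀ A` and `X = B_TL⁻¹`. The formula
`M̄_s⁻¹ = Ms⁻¹ + Ms⁻ᵀ - Ms⁻ᵀ A_s Ms⁻¹` gives `(I - T')(I - T) = I - S M̄_s⁻¹ Sᵀ A`, whence
`E_TL = I - X A`. Since `A (I - T') = (I - T)ᵀ A` and `A (I - Π_A) = (I - Π_A)ᵀ A (I - Π_A)`,
`A - A X A = A E_TL = Kᵀ A K` with `K = (I - Π_A)(I - T)` is positive semidefinite, while `X` is
SPD because `(S P)` has full row rank. Conjugation by `A^{1/2}` turns `X A` into the SPD matrix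
`R = A^{1/2} X A^{1/2} ≤ I` and `E_TL` into `I - R ≥ 0`; the `A`-norm of `E_TL` becomes the
spectral norm of `I - R`, which is its largest eigenvalue.
-/

open Matrix

/-- `M̄_s = Ms (Ms + Msᵀ - As)⁻¹ Msᵀ`. -/
noncomputable def barMs {ns : ℕ} (Ms As : Matrix (Fin ns) (Fin ns) ℝ) :
    Matrix (Fin ns) (Fin ns) ℝ :=
  Ms * (Ms + Msᵀ - As)⁻¹ * Msᵀ

/-- Inverse of the exact TLHB preconditioner:
`B_TL⁻¹ = S M̄_s⁻¹ Sᵀ + (I - S Ms⁻ᵀ Sᵀ A) P A_c⁻¹ Pᵀ (I - A S Ms⁻¹ Sᵀ)`. -/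
noncomputable def invBtl {n ns nc : ℕ} (A : Matrix (Fin n) (Fin n) ℝ)
    (S : Matrix (Fin n) (Fin ns) ℝ) (P : Matrix (Fin n) (Fin nc) ℝ)
    (Ms : Matrix (Fin ns) (Fin ns) ℝ) : Matrix (Fin n) (Fin n) ℝ :=
  S * (barMs Ms (Sᵀ * A * S))⁻¹ * Sᵀ +
    (1 - S * (Msᵀ)⁻¹ * Sᵀ * A) * P * (Pᵀ * A * P)⁻¹ * Pᵀ * (1 - A * S * Ms⁻¹ * Sᵀ)

open scoped MatrixOrder

namespace Matrix

variable {m k l : Type*} [Fintype k]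

lemma mulVec_injective_of_rank_eq_card {K : Type*} [Field K] {M : Matrix m k K}
    (h : M.rank = Fintype.card k) : Function.Injective M.mulVec := by
  have hdim := LinearMap.finrank_range_add_finrank_ker M.mulVecLin
  rw [← rank, h, Module.finrank_fintype_fun_eq_card, add_eq_left,
    Submodule.finrank_eq_zero, LinearMap.ker_eq_bot] at hdim
  exact hdim

variable [Fintype m] [Fintype l]

lemma dotProduct_mul_mul_transpose_mulVec (B : Matrix m k ℝ) (N : Matrix k k ℝ) (x : m → ℝ) :
    x ⬝ᵥ (B * N * Bᵀ) *ᵥ x = (Bᵀ *ᵥ x) ⬝ᵥ N *ᵥ (Bᵀ *ᵥ x) := by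
  rw [← mulVec_mulVec, ← mulVec_mulVec, dotProduct_mulVec, mulVec_transpose]

lemma PosDef.add_mul_mul_transpose {N₁ : Matrix k k ℝ} {N₂ : Matrix l l ℝ} (h₁ : N₁.PosDef)
    (h₂ : N₂.PosDef) {B : Matrix m k ℝ} {C : Matrix m l ℝ}
    (hBC : ∀ x, Bᵀ *ᵥ x = 0 → Cᵀ *ᵥ x = 0 → x = 0) :
    (B * N₁ * Bᵀ + C * N₂ * Cᵀ).PosDef := by
  have hherm₁ : (B * N₁ * Bᵀ).IsHermitian := by
    simpa using isHermitian_mul_mul_conjTranspose B h₁.1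
  have hherm₂ : (C * N₂ * Cᵀ).IsHermitian := by
    simpa using isHermitian_mul_mul_conjTranspose C h₂.1
  refine .of_dotProduct_mulVec_pos (hherm₁.add hherm₂) fun x hx => ?_
  rw [star_trivial, add_mulVec, dotProduct_add, dotProduct_mul_mul_transpose_mulVec,
    dotProduct_mul_mul_transpose_mulVec]
  have hq₁ := h₁.posSemidef.dotProduct_mulVec_nonneg (Bᵀ *ᵥ x)
  have hq₂ := h₂.posSemidef.dotProduct_mulVec_nonneg (Cᵀ *ᵥ x)
  rw [star_trivial] at hq₁ hq₂
  by_cases hB : Bᵀ *ᵥ x = 0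
  · have hC : Cᵀ *ᵥ x ≠ 0 := fun hC => hx (hBC x hB hC)
    have := h₂.dotProduct_mulVec_pos hC
    rw [star_trivial] at this
    linarith
  · have := h₁.dotProduct_mulVec_pos hB
    rw [star_trivial] at this
    linarith

lemma PosDef.transpose_mul_mul_of_rank_eq {A : Matrix m m ℝ} (hA : A.PosDef) {P : Matrix m k ℝ}
    (hP : P.rank = Fintype.card k) : (Pᵀ * A * P).PosDef := by
  simpa using hA.conjTranspose_mul_mul_same (mulVec_injective_of_rank_eq_card hP)

variable [DecidableEq m]

lemma PosDef.exists_mul_self_eq {A : Matrix m m ℝ} (hA : A.PosDef) :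
    ∃ H : Matrix m m ℝ, H.PosDef ∧ H * H = A := by
  have hH : CFC.sqrt A * CFC.sqrt A = A := CFC.sqrt_mul_sqrt_self A hA.posSemidef.nonneg
  refine ⟨CFC.sqrt A, (CFC.sqrt_nonneg A).posSemidef.posDef_iff_isUnit.2 ?_, hH⟩
  exact isUnit_of_mul_isUnit_left (hH ▸ hA.isUnit)

lemma spectrum_nonsing_inv_mul_mul {K : Type*} [Field K] {H : Matrix m m K} (hH : IsUnit H)
    (F : Matrix m m K) : spectrum K (H⁻¹ * F * H) = spectrum K F := by
  obtain ⟨u, rfl⟩ := hH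
  rw [← coe_units_inv, spectrum.units_conjugate']

lemma exists_mulVec_eq_smul_of_mem_spectrum {K : Type*} [Field K] {F : Matrix m m K} {c : K}
    (hc : c ∈ spectrum K F) : ∃ v ≠ 0, F *ᵥ v = c • v := by
  rw [spectrum.mem_iff, isUnit_iff_isUnit_det, isUnit_iff_ne_zero, not_not,
    ← exists_mulVec_eq_zero_iff] at hc
  obtain ⟨v, hv, h⟩ := hc
  rw [Algebra.algebraMap_eq_smul_one, sub_mulVec, smul_mulVec, one_mulVec, sub_eq_zero] at h
  exact ⟨v, hv, h.symm⟩

end Matrix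

section Spectral

variable {n : ℕ}

lemma lamMax_one_sub {R : Matrix (Fin n) (Fin n) ℝ} (hR : (spectrum ℝ R).Nonempty) :
    lamMax (1 - R) = 1 - lamMin R := by
  rw [lamMax, lamMin, ← map_one (algebraMap ℝ (Matrix (Fin n) (Fin n) ℝ)),
    ← spectrum.singleton_sub_eq, Set.singleton_sub]
  exact (Antitone.map_csInf_of_continuousAt (continuous_sub_left 1).continuousAt
    (fun _ _ h => sub_le_sub_left h 1) hR R.finite_real_spectrum.bddBelow).symm

lemma eNorm_eq_eNorm_one_mulVec {A H : Matrix (Fin n) (Fin n) ℝ} (hH : Hᵀ = H)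
    (hA : H * H = A) (v : Fin n → ℝ) : eNorm A v = eNorm 1 (H *ᵥ v) := by
  rw [eNorm, eNorm, one_mulVec, ← hA, ← mulVec_mulVec, dotProduct_mulVec, ← mulVec_transpose, hH]

lemma eNorm_one_smul (c : ℝ) (v : Fin n → ℝ) : eNorm 1 (c • v) = |c| * eNorm 1 v := by
  rw [eNorm, eNorm, one_mulVec, one_mulVec, smul_dotProduct, dotProduct_smul, smul_eq_mul,
    smul_eq_mul, ← mul_assoc, ← sq, Real.sqrt_mul (sq_nonneg c), Real.sqrt_sq_eq_abs]

lemma aNorm_nonsing_inv_mul_mul {A H : Matrix (Fin n) (Fin n) ℝ} (hH : H.PosDef)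
    (hA : H * H = A) (F : Matrix (Fin n) (Fin n) ℝ) : aNorm A (H⁻¹ * F * H) = aNorm 1 F := by
  have hHt : Hᵀ = H := by simpa using hH.1.eq
  have hHu : IsUnit H.det := (isUnit_iff_isUnit_det H).1 hH.isUnit
  have hinj : Function.Injective H.mulVec := mulVec_injective_iff_isUnit.2 hH.isUnit
  have hsurj : Function.Surjective H.mulVec := mulVec_surjective_iff_isUnit.2 hH.isUnit
  have hratio : ∀ v, eNorm A ((H⁻¹ * F * H) *ᵥ v) / eNorm A v =
      eNorm 1 (F *ᵥ (H *ᵥ v)) / eNorm 1 (H *ᵥ v) := fun v => by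
    rw [eNorm_eq_eNorm_one_mulVec hHt hA, eNorm_eq_eNorm_one_mulVec hHt hA, mulVec_mulVec,
      mulVec_mulVec, ← Matrix.mul_assoc, ← Matrix.mul_assoc, mul_nonsing_inv _ hHu,
      Matrix.one_mul]
  unfold aNorm
  congr 1
  ext r
  constructor
  · rintro ⟨v, hv, rfl⟩
    exact ⟨H *ᵥ v, fun h => hv (hinj (h.trans (mulVec_zero H).symm)), hratio v⟩
  · rintro ⟨w, hw, rfl⟩
    obtain ⟨v, rfl⟩ := hsurj w
    exact ⟨v, fun h => hw (h ▸ mulVec_zero H), (hratio v).symm⟩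

lemma eNorm_one_pos {v : Fin n → ℝ} (hv : v ≠ 0) : 0 < eNorm 1 v := by
  have h := PosDef.one.dotProduct_mulVec_pos hv
  rw [star_trivial] at h
  exact Real.sqrt_pos.2 h

lemma eNorm_one_mulVec_le {F : Matrix (Fin n) (Fin n) ℝ} (hF : Fᵀ = F) {c : ℝ} (hc : 0 ≤ c)
    (hFc : F * F ≤ algebraMap ℝ _ (c ^ 2)) (w : Fin n → ℝ) :
    eNorm 1 (F *ᵥ w) ≤ c * eNorm 1 w := by
  have hquad : (F *ᵥ w) ⬝ᵥ (F *ᵥ w) ≤ c ^ 2 * (w ⬝ᵥ w) := by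
    have h := (le_iff.1 hFc).dotProduct_mulVec_nonneg w
    rw [star_trivial, Algebra.algebraMap_eq_smul_one, sub_mulVec, dotProduct_sub, smul_mulVec,
      one_mulVec, dotProduct_smul, smul_eq_mul, ← mulVec_mulVec, dotProduct_mulVec w F,
      ← mulVec_transpose, hF] at h
    linarith
  rw [eNorm, eNorm, one_mulVec, one_mulVec, ← Real.sqrt_sq hc, ← Real.sqrt_mul (sq_nonneg _)]
  exact Real.sqrt_le_sqrt hquad

lemma aNorm_one_eq_lamMax [NeZero n] {F : Matrix (Fin n) (Fin n) ℝ} (hF : F.PosSemidef) :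
    aNorm 1 F = lamMax F := by
  have hne : (spectrum ℝ F).Nonempty := by
    rw [hF.1.spectrum_real_eq_range_eigenvalues]; exact Set.range_nonempty _
  have hc : lamMax F ∈ spectrum ℝ F := hne.csSup_mem F.finite_real_spectrum
  have hc0 : 0 ≤ lamMax F := spectrum_nonneg_of_nonneg hF.nonneg hc
  have hsq : F * F ≤ algebraMap ℝ _ (lamMax F ^ 2) := by
    rw [← sq, ← cfc_pow_id (R := ℝ) F 2 hF.1.isSelfAdjoint]
    exact cfc_le_algebraMap _ _ F fun t ht => pow_le_pow_left₀
      (spectrum_nonneg_of_nonneg hF.nonneg ht) (le_csSup F.finite_real_spectrum.bddAbove ht) 2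
  obtain ⟨v, hv, hFv⟩ := exists_mulVec_eq_smul_of_mem_spectrum hc
  refine IsGreatest.csSup_eq ⟨⟨v, hv, ?_⟩, ?_⟩
  · rw [hFv, eNorm_one_smul, abs_of_nonneg hc0, mul_div_assoc, div_self (eNorm_one_pos hv).ne',
      mul_one]
  · rintro r ⟨w, -, rfl⟩
    exact div_le_of_le_mul₀ (Real.sqrt_nonneg _) hc0
      (eNorm_one_mulVec_le (by simpa using hF.1.eq) hc0 hsq w)

theorem spectral_bounds_one_sub_mul [NeZero n] {A X : Matrix (Fin n) (Fin n) ℝ} (hA : A.PosDef)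
    (hX : X.PosDef) (hAXA : (A - A * X * A).PosSemidef) :
    spectrum ℝ (X * A) ⊆ Set.Ioc 0 1 ∧ aNorm A (1 - X * A) = lamMax (1 - X * A) ∧
      lamMax (1 - X * A) = 1 - lamMin (X * A) ∧ aNorm A (1 - X * A) < 1 := by
  obtain ⟨H, hH, rfl⟩ := hA.exists_mul_self_eq
  have hHt : Hᵀ = H := by simpa using hH.1.eq
  have hHu : IsUnit H.det := (isUnit_iff_isUnit_det H).1 hH.isUnit
  set R := H * X * H
  have hR : R.PosDef := by
    simpa [hHt] using hX.conjTranspose_mul_mul_same (mulVec_injective_iff_isUnit.2 hH.isUnit)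
  have hF : (1 - R).PosSemidef := by
    have h1R : 1 - R = (H⁻¹)ᵀ * (H * H - H * H * X * (H * H)) * H⁻¹ := by
      simp only [transpose_nonsing_inv, hHt, Matrix.mul_sub, Matrix.sub_mul, Matrix.mul_assoc,
        nonsing_inv_mul_cancel_left (A := H) _ hHu, mul_nonsing_inv _ hHu, Matrix.mul_one, R]
    rw [h1R]
    simpa using hAXA.conjTranspose_mul_mul_same H⁻¹
  have hXA : X * (H * H) = H⁻¹ * R * H := by
    simp only [R, Matrix.mul_assoc, nonsing_inv_mul_cancel_left (A := H) _ hHu]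
  have hE : 1 - X * (H * H) = H⁻¹ * (1 - R) * H := by
    rw [hXA, Matrix.mul_sub, Matrix.sub_mul, Matrix.mul_one, nonsing_inv_mul _ hHu]
  have hspec : spectrum ℝ (X * (H * H)) = spectrum ℝ R := by
    rw [hXA, spectrum_nonsing_inv_mul_mul hH.isUnit]
  have hne : (spectrum ℝ R).Nonempty := by
    rw [hR.1.spectrum_real_eq_range_eigenvalues]; exact Set.range_nonempty _
  have hsub : spectrum ℝ R ⊆ Set.Ioc 0 1 := fun t ht => by
    refine ⟨hR.isStrictlyPositive.spectrum_pos ht, sub_nonneg.1 ?_⟩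
    refine spectrum_nonneg_of_nonneg hF.nonneg ?_
    rw [← map_one (algebraMap ℝ (Matrix (Fin n) (Fin n) ℝ)), ← spectrum.singleton_sub_eq]
    exact Set.sub_mem_sub rfl ht
  have hlam := lamMax_one_sub (hspec ▸ hne)
  have hnorm : aNorm (H * H) (1 - X * (H * H)) = lamMax (1 - X * (H * H)) := by
    rw [hE, aNorm_nonsing_inv_mul_mul hH rfl,
      aNorm_one_eq_lamMax hF, lamMax, lamMax, spectrum_nonsing_inv_mul_mul hH.isUnit]
  rw [← hspec] at hsub hne
  refine ⟨hsub, hnorm, hlam, ?_⟩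
  rw [hnorm, hlam, lamMin]
  linarith [(hsub (hne.csInf_mem (X * (H * H)).finite_real_spectrum)).1]

end Spectral

lemma inv_barMs {k : ℕ} {Ms As : Matrix (Fin k) (Fin k) ℝ} (hMs : IsUnit Ms.det)
    (hW : IsUnit (Ms + Msᵀ - As).det) :
    (barMs Ms As)⁻¹ = Ms⁻¹ + (Msᵀ)⁻¹ - (Msᵀ)⁻¹ * As * Ms⁻¹ := by
  have hMsT : IsUnit Msᵀ.det := by rwa [det_transpose]
  rw [barMs, Matrix.mul_inv_rev, Matrix.mul_inv_rev, nonsing_inv_nonsing_inv _ hW]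
  simp only [Matrix.mul_add, Matrix.add_mul, Matrix.mul_sub, Matrix.sub_mul, Matrix.mul_assoc,
    nonsing_inv_mul_cancel_left (A := Msᵀ) _ hMsT, mul_nonsing_inv _ hMs, Matrix.mul_one]
  abel

section TLHB

variable {n ns nc : ℕ} {A : Matrix (Fin n) (Fin n) ℝ} {S : Matrix (Fin n) (Fin ns) ℝ}
  {P : Matrix (Fin n) (Fin nc) ℝ} {Ms : Matrix (Fin ns) (Fin ns) ℝ}

lemma one_sub_smoother_mul_one_sub_smoother (hMs : IsUnit Ms.det)
    (hW : IsUnit (Ms + Msᵀ - Sᵀ * A * S).det) :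
    (1 - S * (Msᵀ)⁻¹ * Sᵀ * A) * (1 - S * Ms⁻¹ * Sᵀ * A) =
      1 - S * (barMs Ms (Sᵀ * A * S))⁻¹ * Sᵀ * A := by
  rw [inv_barMs hMs hW]
  simp only [Matrix.mul_add, Matrix.add_mul, Matrix.mul_sub, Matrix.sub_mul, Matrix.mul_assoc,
    Matrix.mul_one, Matrix.one_mul]
  abel

theorem Etl_eq_one_sub_invBtl_mul (hMs : IsUnit Ms.det)
    (hW : IsUnit (Ms + Msᵀ - Sᵀ * A * S).det) :
    Etl A S P Ms = 1 - invBtl A S P Ms * A := by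
  have hcoarse : (1 - S * (Msᵀ)⁻¹ * Sᵀ * A) * P * (Pᵀ * A * P)⁻¹ * Pᵀ *
      (1 - A * S * Ms⁻¹ * Sᵀ) * A =
      (1 - S * (Msᵀ)⁻¹ * Sᵀ * A) * proj A P * (1 - S * Ms⁻¹ * Sᵀ * A) := by
    simp only [proj, Matrix.mul_sub, Matrix.sub_mul, Matrix.mul_one, Matrix.one_mul,
      Matrix.mul_assoc]
  have hE : Etl A S P Ms = (1 - S * (Msᵀ)⁻¹ * Sᵀ * A) * (1 - S * Ms⁻¹ * Sᵀ * A) -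
      (1 - S * (Msᵀ)⁻¹ * Sᵀ * A) * proj A P * (1 - S * Ms⁻¹ * Sᵀ * A) := by
    rw [Etl, Matrix.mul_sub (1 - S * (Msᵀ)⁻¹ * Sᵀ * A) 1, Matrix.mul_one, Matrix.sub_mul]
  rw [hE, one_sub_smoother_mul_one_sub_smoother hMs hW, invBtl, Matrix.add_mul, hcoarse,
    sub_add_eq_sub_sub]

lemma transpose_one_sub_smoother_mul (hA : Aᵀ = A) :
    (1 - S * Ms⁻¹ * Sᵀ * A)ᵀ * A = A * (1 - S * (Msᵀ)⁻¹ * Sᵀ * A) := by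
  simp only [transpose_sub, transpose_one, transpose_mul, transpose_transpose, hA,
    transpose_nonsing_inv, Matrix.sub_mul, Matrix.mul_sub, Matrix.one_mul, Matrix.mul_one,
    Matrix.mul_assoc]

lemma proj_mul_proj (hAc : IsUnit (Pᵀ * A * P).det) : proj A P * proj A P = proj A P :=
  calc proj A P * proj A P = P * ((Pᵀ * A * P)⁻¹ * (Pᵀ * A * P)) * ((Pᵀ * A * P)⁻¹ * Pᵀ * A) := by
        simp only [proj, Matrix.mul_assoc]
    _ = proj A P := by
        rw [nonsing_inv_mul _ hAc, Matrix.mul_one]; simp only [proj, Matrix.mul_assoc]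

lemma transpose_one_sub_proj_mul (hA : Aᵀ = A) (hAc : IsUnit (Pᵀ * A * P).det) :
    (1 - proj A P)ᵀ * A * (1 - proj A P) = A * (1 - proj A P) := by
  have hsymm : (proj A P)ᵀ * A = A * proj A P := by
    simp only [proj, transpose_mul, transpose_transpose, hA, transpose_nonsing_inv,
      Matrix.mul_assoc]
  have hidem : A * proj A P * proj A P = A * proj A P := by
    rw [Matrix.mul_assoc, proj_mul_proj hAc]
  rw [transpose_sub, transpose_one, Matrix.sub_mul, Matrix.one_mul, hsymm, Matrix.mul_sub,
    Matrix.mul_sub, Matrix.mul_one, Matrix.sub_mul, hidem]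
  simp only [Matrix.mul_one, sub_self, sub_zero]

lemma mul_Etl (hA : Aᵀ = A) (hAc : IsUnit (Pᵀ * A * P).det) :
    A * Etl A S P Ms = ((1 - proj A P) * (1 - S * Ms⁻¹ * Sᵀ * A))ᵀ * A *
      ((1 - proj A P) * (1 - S * Ms⁻¹ * Sᵀ * A)) :=
  calc A * Etl A S P Ms
      = A * (1 - S * (Msᵀ)⁻¹ * Sᵀ * A) * (1 - proj A P) * (1 - S * Ms⁻¹ * Sᵀ * A) := by
        simp only [Etl, Matrix.mul_assoc]
    _ = (1 - S * Ms⁻¹ * Sᵀ * A)ᵀ * (A * (1 - proj A P)) * (1 - S * Ms⁻¹ * Sᵀ * A) := by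
        rw [← transpose_one_sub_smoother_mul hA, Matrix.mul_assoc _ A]
    _ = _ := by
        rw [← transpose_one_sub_proj_mul hA hAc, transpose_mul]
        simp only [Matrix.mul_assoc]

theorem posSemidef_sub_mul_invBtl_mul (hA : A.PosDef) (hAc : IsUnit (Pᵀ * A * P).det)
    (hMs : IsUnit Ms.det) (hW : IsUnit (Ms + Msᵀ - Sᵀ * A * S).det) :
    (A - A * invBtl A S P Ms * A).PosSemidef := by
  have hAt : Aᵀ = A := by simpa using hA.1.eq
  have h := hA.posSemidef.conjTranspose_mul_mul_same ((1 - proj A P) * (1 - S * Ms⁻¹ * Sᵀ * A))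
  rwa [conjTranspose_eq_transpose_of_trivial, ← mul_Etl hAt hAc,
    Etl_eq_one_sub_invBtl_mul hMs hW, Matrix.mul_sub, Matrix.mul_one, ← Matrix.mul_assoc] at h

theorem invBtl_posDef (hA : Aᵀ = A) (hAc : (Pᵀ * A * P).PosDef) (hSP : (fromCols S P).rank = n)
    (hMs : IsUnit Ms.det) (hMsA : (Ms + Msᵀ - Sᵀ * A * S).PosDef) :
    (invBtl A S P Ms).PosDef := by
  have hbar : (barMs Ms (Sᵀ * A * S)).PosDef := by
    simpa [barMs] using hMsA.inv.mul_mul_conjTranspose_same (B := Ms)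
      (vecMul_injective_iff_isUnit.2 ((isUnit_iff_isUnit_det Ms).2 hMs))
  set G := (1 - S * (Msᵀ)⁻¹ * Sᵀ * A) * P
  have hG : Gᵀ = Pᵀ * (1 - A * S * Ms⁻¹ * Sᵀ) := by
    simp [G, transpose_mul, transpose_nonsing_inv, hA, Matrix.mul_sub, Matrix.sub_mul,
      Matrix.mul_assoc]
  have hB : invBtl A S P Ms = S * (barMs Ms (Sᵀ * A * S))⁻¹ * Sᵀ + G * (Pᵀ * A * P)⁻¹ * Gᵀ := by
    rw [hG, invBtl]; simp only [G, Matrix.mul_assoc]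
  rw [hB]
  refine hbar.inv.add_mul_mul_transpose hAc.inv fun x hS hGx => ?_
  have hPx : Pᵀ *ᵥ x = 0 := by
    rwa [hG, ← mulVec_mulVec, sub_mulVec, one_mulVec, ← mulVec_mulVec, hS, mulVec_zero,
      sub_zero] at hGx
  apply mulVec_injective_of_rank_eq_card (M := (fromCols S P)ᵀ) (by simpa using hSP)
  rw [transpose_fromCols, fromRows_mulVec, hS, hPx, mulVec_zero, Sum.elim_zero_zero]

end TLHB

theorem exact_tlhb_preconditioner_general {n ns nc : ℕ}
    (A : Matrix (Fin n) (Fin n) ℝ) (hA : A.PosDef)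
    (S : Matrix (Fin n) (Fin ns) ℝ)
    (P : Matrix (Fin n) (Fin nc) ℝ) (hP : P.rank = nc)
    (hns : ns < n)
    (hSP : (fromCols S P).rank = n)
    (Ms : Matrix (Fin ns) (Fin ns) ℝ) (hMs : IsUnit Ms.det)
    (hMsA : (Ms + Msᵀ - Sᵀ * A * S).PosDef) :
    spectrum ℝ (invBtl A S P Ms * A) ⊆ Set.Ioc (0 : ℝ) 1 ∧
    (invBtl A S P Ms).PosDef ∧
    Etl A S P Ms = 1 - invBtl A S P Ms * A ∧
    aNorm A (Etl A S P Ms) = lamMax (Etl A S P Ms) ∧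
    lamMax (Etl A S P Ms) = 1 - lamMin (invBtl A S P Ms * A) ∧
    aNorm A (Etl A S P Ms) < 1 := by
  have : NeZero n := ⟨by omega⟩
  have hAc := hA.transpose_mul_mul_of_rank_eq (P := P) (by simpa using hP)
  have hW : IsUnit (Ms + Msᵀ - Sᵀ * A * S).det := (isUnit_iff_isUnit_det _).1 hMsA.isUnit
  have hX := invBtl_posDef (by simpa using hA.1.eq) hAc hSP hMs hMsA
  obtain ⟨hspec, hnorm, hlam, hlt⟩ := spectral_bounds_one_sub_mul hA hX
    (posSemidef_sub_mul_invBtl_mul hA ((isUnit_iff_isUnit_det _).1 hAc.isUnit) hMs hW)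
  rw [Etl_eq_one_sub_invBtl_mul hMs hW]
  exact ⟨hspec, hX, rfl, hnorm, hlam, hlt⟩

/-- The spectrum of `B_TL⁻¹ A` lies in `(0, 1]`: the exact TLHB preconditioner is SPD,
`E_TL = I - B_TL⁻¹ A`, and `‖E_TL‖_A = λ_max(E_TL) = 1 - λ_min(B_TL⁻¹ A) < 1`. -/
theorem exact_tlhb_preconditioner {n ns nc : ℕ}
    (A : Matrix (Fin n) (Fin n) ℝ) (hA : A.PosDef)
    (S : Matrix (Fin n) (Fin ns) ℝ) (hS : S.rank = ns)
    (P : Matrix (Fin n) (Fin nc) ℝ) (hP : P.rank = nc)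
    (hns : ns < n) (hnc : nc < n) (hsum : n ≤ ns + nc)
    (hSP : (fromCols S P).rank = n)
    (Ms : Matrix (Fin ns) (Fin ns) ℝ) (hMs : IsUnit Ms.det)
    (hMsA : (Ms + Msᵀ - Sᵀ * A * S).PosDef) :
    spectrum ℝ (invBtl A S P Ms * A) ⊆ Set.Ioc (0 : ℝ) 1 ∧
    (invBtl A S P Ms).PosDef ∧
    Etl A S P Ms = 1 - invBtl A S P Ms * A ∧
    aNorm A (Etl A S P Ms) = lamMax (Etl A S P Ms) ∧
    lamMax (Etl A S P Ms) = 1 - lamMin (invBtl A S P Ms * A) ∧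
    aNorm A (Etl A S P Ms) < 1 :=
  exact_tlhb_preconditioner_general A hA S P hP hns hSP Ms hMs hMsA
end
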